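/- Let T = (T_n) ∈ A and let δ > 0. Then the set {λ ∈ ℂ : |λ| ≥ δ and λ is an eigenvalue of T_n for some n ≥ 1} is finite. In particular, the eigenvalues of the matrices T_n, taken over all n, accumulate only possibly at 0. -/

import Mathlib

set_option maxHeartbeats 1000000
set_option synthInstance.maxHeartbeats 200000


noncomputable section

/-- The operator norm on `M_n(ℂ)` acting on `ℓ²(Fin n)`. -/
def opNorm {n : ℕ} (x : Matrix (Fin n) (Fin n) ℂ) : ℝ :=
  ‖LinearMap.toContinuousLinearMap (Matrix.toEuclideanLin x)‖

/-- The diagonal matrix `d_n` whose `k`-th diagonal entry is `c_n ^ k` (for `1 ≤ k ≤ n`). -/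
def dMat (c : ℕ → ℝ) (n : ℕ) : Matrix (Fin n) (Fin n) ℂ :=
  Matrix.diagonal fun k => ((c n ^ ((k : ℕ) + 1) : ℝ) : ℂ)

/-- The inverse `d_n⁻¹`. -/
def dMatInv (c : ℕ → ℝ) (n : ℕ) : Matrix (Fin n) (Fin n) ℂ :=
  Matrix.diagonal fun k => (((c n ^ ((k : ℕ) + 1))⁻¹ : ℝ) : ℂ)

/-- The norm `p_n(x) = max {‖x‖, ‖d_n x d_n⁻¹‖}`. -/
def pnorm (c : ℕ → ℝ) (n : ℕ) (x : Matrix (Fin n) (Fin n) ℂ) : ℝ :=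
  max (opNorm x) (opNorm (dMat c n * x * dMatInv c n))

/-- The left shift `L_n`: `L_n e_{k+1} = e_k`, `L_n e_1 = 0`. -/
def Lmat (n : ℕ) : Matrix (Fin n) (Fin n) ℂ :=
  Matrix.of fun i j => if (i : ℕ) + 1 = (j : ℕ) then 1 else 0

/-- The integer interval `E_{n,k} = {i ∈ ℕ : n/k ≤ i ≤ 2n/k}`. -/
def Eset (n k : ℕ) : Finset ℕ :=
  (Finset.range (2 * n + 1)).filter fun i => (n : ℝ) / k ≤ i ∧ (i : ℝ) ≤ 2 * n / k

/-- `u_{n,k} = μ_{n,k}⁻¹ ∑_{i ∈ E_{n,k}} L_n^i` if `k ≤ n`, and `u_{n,k} = I_n` if `n < k`. -/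
def umat (n k : ℕ) : Matrix (Fin n) (Fin n) ℂ :=
  if k ≤ n then ((Eset n k).card : ℂ)⁻¹ • ∑ i ∈ Eset n k, Lmat n ^ i else 1

/-- Membership in the algebra `A`: `p(T) < ∞` and
`sup_n p_n(T_n u_{n,k} − T_n) + sup_n p_n(u_{n,k} T_n − T_n) → 0` as `k → ∞`. -/
def memA (c : ℕ → ℝ) (T : ∀ n, Matrix (Fin n) (Fin n) ℂ) : Prop :=
  (∃ M : ℝ, ∀ n, pnorm c n (T n) ≤ M) ∧
  ∀ ε : ℝ, 0 < ε → ∃ K : ℕ, ∀ k, K ≤ k → ∀ n,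
    pnorm c n (T n * umat n k - T n) + pnorm c n (umat n k * T n - T n) ≤ ε

/-- `p(T) = sup_n p_n(T_n)`. -/
def pA (c : ℕ → ℝ) (T : ∀ n, Matrix (Fin n) (Fin n) ℂ) : ℝ :=
  ⨆ n, pnorm c n (T n)

/-- The upper triangular part `Δ̄_U x`. -/
def upperT {n : ℕ} (x : Matrix (Fin n) (Fin n) ℂ) : Matrix (Fin n) (Fin n) ℂ :=
  Matrix.of fun i j => if i ≤ j then x i j else 0

/-- The strictly lower triangular part `Δ_L x`. -/
def lowerT {n : ℕ} (x : Matrix (Fin n) (Fin n) ℂ) : Matrix (Fin n) (Fin n) ℂ :=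
  Matrix.of fun i j => if j < i then x i j else 0

/-! ### Auxiliary lemmas -/

lemma opNorm_eq {n : ℕ} (x : Matrix (Fin n) (Fin n) ℂ) :
    opNorm x = ‖Matrix.toEuclideanCLM (𝕜 := ℂ) x‖ := rfl

lemma opNorm_nonneg {n : ℕ} (x : Matrix (Fin n) (Fin n) ℂ) : 0 ≤ opNorm x := by
  rw [opNorm_eq]; exact norm_nonneg _

lemma pnorm_nonneg (c : ℕ → ℝ) (n : ℕ) (x : Matrix (Fin n) (Fin n) ℂ) : 0 ≤ pnorm c n x :=
  le_trans (opNorm_nonneg x) (le_max_left _ _)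

lemma opNorm_mul_le {n : ℕ} (X Y : Matrix (Fin n) (Fin n) ℂ) :
    opNorm (X * Y) ≤ opNorm X * opNorm Y := by
  rw [opNorm_eq, opNorm_eq, opNorm_eq, map_mul]
  exact norm_mul_le _ _

lemma opNorm_le_sub_add {n : ℕ} (X Y : Matrix (Fin n) (Fin n) ℂ) :
    opNorm X ≤ opNorm (X - Y) + opNorm Y := by
  rw [opNorm_eq, opNorm_eq, opNorm_eq, map_sub]
  simpa using norm_add_le (Matrix.toEuclideanCLM (𝕜 := ℂ) X - Matrix.toEuclideanCLM (𝕜 := ℂ) Y)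
    (Matrix.toEuclideanCLM (𝕜 := ℂ) Y)

lemma opNorm_sub_rev {n : ℕ} (X Y : Matrix (Fin n) (Fin n) ℂ) :
    opNorm (X - Y) = opNorm (Y - X) := by
  rw [opNorm_eq, opNorm_eq, map_sub, map_sub, norm_sub_rev]

/-- extension of a vector by zero -/
def vExt {n : ℕ} (v : Fin n → ℂ) (m : ℕ) : ℂ := if h : m < n then v ⟨m, h⟩ else 0

lemma L_mulVec {n : ℕ} (v : Fin n → ℂ) (i : Fin n) :
    (Lmat n).mulVec v i = vExt v ((i : ℕ) + 1) := by
  unfold Matrix.mulVec dotProduct Lmat vExt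
  simp only [Matrix.of_apply, ite_mul, one_mul, zero_mul]
  by_cases h : (i : ℕ) + 1 < n
  · rw [dif_pos h, Finset.sum_eq_single (⟨(i : ℕ) + 1, h⟩ : Fin n)]
    · simp
    · intro j _ hj
      rw [if_neg]
      intro hc
      exact hj (by ext; simp [← hc])
    · simp
  · rw [dif_neg h, Finset.sum_eq_zero]
    intro j _
    rw [if_neg]
    intro hc
    exact h (hc ▸ j.isLt)

lemma opNorm_L_le (n : ℕ) : opNorm (Lmat n) ≤ 1 := by
  rw [opNorm_eq]
  refine ContinuousLinearMap.opNorm_le_bound _ zero_le_one (fun v => ?_)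
  rw [one_mul]
  have happ : ∀ i : Fin n, (Matrix.toEuclideanCLM (𝕜 := ℂ) (Lmat n) v) i
      = (Lmat n).mulVec v i := fun i => rfl
  rw [EuclideanSpace.norm_eq, EuclideanSpace.norm_eq]
  apply Real.sqrt_le_sqrt
  calc ∑ i : Fin n, ‖(Matrix.toEuclideanCLM (𝕜 := ℂ) (Lmat n) v) i‖ ^ 2
      = ∑ i : Fin n, ‖vExt v ((i : ℕ) + 1)‖ ^ 2 :=
        Finset.sum_congr rfl (fun i _ => by rw [happ i, L_mulVec])
    _ = ∑ m ∈ Finset.range n, ‖vExt v (m + 1)‖ ^ 2 :=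
        Fin.sum_univ_eq_sum_range (fun m => ‖vExt v (m + 1)‖ ^ 2) n
    _ ≤ ‖vExt v 0‖ ^ 2 + ∑ m ∈ Finset.range n, ‖vExt v (m + 1)‖ ^ 2 :=
        le_add_of_nonneg_left (by positivity)
    _ = ∑ m ∈ Finset.range (n + 1), ‖vExt v m‖ ^ 2 := by
        rw [Finset.sum_range_succ' (fun m => ‖vExt v m‖ ^ 2) n, add_comm]
    _ = ∑ m ∈ Finset.range n, ‖vExt v m‖ ^ 2 := by
        rw [Finset.sum_range_succ]
        simp [vExt]
    _ = ∑ i : Fin n, ‖v i‖ ^ 2 := by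
        rw [← Fin.sum_univ_eq_sum_range (fun m => ‖vExt v m‖ ^ 2) n]
        exact Finset.sum_congr rfl (fun i _ => by simp [vExt, Fin.is_lt])

lemma clm_pow_norm_le {n : ℕ} (f : EuclideanSpace ℂ (Fin n) →L[ℂ] EuclideanSpace ℂ (Fin n))
    (h : ‖f‖ ≤ 1) : ∀ i : ℕ, ‖f ^ i‖ ≤ 1
  | 0 => by
      rw [pow_zero, ContinuousLinearMap.one_def]
      exact ContinuousLinearMap.norm_id_le
  | (i + 1) => by
      rw [pow_succ]
      calc ‖f ^ i * f‖ ≤ ‖f ^ i‖ * ‖f‖ := norm_mul_le _ _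
        _ ≤ 1 * 1 := mul_le_mul (clm_pow_norm_le f h i) h (norm_nonneg _) zero_le_one
        _ = 1 := one_mul 1

variable {c : ℕ → ℝ} {n : ℕ}

lemma dInv_mul_d (hc : c n ≠ 0) : dMatInv c n * dMat c n = 1 := by
  unfold dMat dMatInv
  rw [Matrix.diagonal_mul_diagonal]
  convert Matrix.diagonal_one with k
  rw [← Complex.ofReal_mul, inv_mul_cancel₀ (pow_ne_zero _ hc), Complex.ofReal_one]

lemma d_mul_dInv (hc : c n ≠ 0) : dMat c n * dMatInv c n = 1 := by
  unfold dMat dMatInv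
  rw [Matrix.diagonal_mul_diagonal]
  convert Matrix.diagonal_one with k
  rw [← Complex.ofReal_mul, mul_inv_cancel₀ (pow_ne_zero _ hc), Complex.ofReal_one]

lemma dLd (hc : c n ≠ 0) :
    dMat c n * Lmat n * dMatInv c n = (((c n)⁻¹ : ℝ) : ℂ) • Lmat n := by
  ext a b
  simp only [dMat, dMatInv, Lmat, Matrix.mul_diagonal, Matrix.diagonal_mul, Matrix.smul_apply,
    Matrix.of_apply, smul_eq_mul, mul_ite, ite_mul, mul_one, mul_zero, zero_mul, one_mul]
  by_cases h : (a : ℕ) + 1 = (b : ℕ)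
  · rw [if_pos h, if_pos h, ← h]
    push_cast
    rw [pow_succ ((c n : ℂ)) ((a : ℕ) + 1), mul_inv, ← mul_assoc,
      mul_inv_cancel₀ (pow_ne_zero _ (by exact_mod_cast hc)), one_mul]
  · rw [if_neg h, if_neg h]

lemma conjMul (hc : c n ≠ 0) (X Y : Matrix (Fin n) (Fin n) ℂ) :
    (dMat c n * X * dMatInv c n) * (dMat c n * Y * dMatInv c n)
      = dMat c n * (X * Y) * dMatInv c n := by
  have h := dInv_mul_d (c := c) (n := n) hc
  simp only [mul_assoc]
  rw [← mul_assoc (dMatInv c n) (dMat c n), h, one_mul]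

lemma conjPow (hc : c n ≠ 0) (i : ℕ) :
    dMat c n * (Lmat n) ^ i * dMatInv c n = ((((c n)⁻¹ : ℝ) : ℂ)) ^ i • (Lmat n) ^ i := by
  induction i with
  | zero => simp [d_mul_dInv hc]
  | succ i ih =>
      rw [pow_succ, ← conjMul hc, ih, dLd hc, smul_mul_assoc, mul_smul_comm, smul_smul,
        ← pow_succ, pow_succ]

lemma Eset_nonempty {k : ℕ} (hk : 1 ≤ k) (hkn : k ≤ n) : (Eset n k).Nonempty := by
  refine ⟨n / k + 1, ?_⟩
  have hk0 : (0 : ℝ) < k := by exact_mod_cast hk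
  simp only [Eset, Finset.mem_filter, Finset.mem_range]
  refine ⟨?_, ?_, ?_⟩
  · have h1 : n / k ≤ n := Nat.div_le_self n k
    have h2 : 1 ≤ n := le_trans hk hkn
    omega
  · have hnat : n < k * (n / k) + k := by
      have h1 := Nat.div_add_mod n k
      have h2 : n % k < k := Nat.mod_lt _ hk
      omega
    have hr : (n : ℝ) < (k : ℝ) * ((n / k : ℕ) : ℝ) + k := by exact_mod_cast hnat
    rw [div_le_iff₀ hk0]
    push_cast
    nlinarith [hr]
  · have h1 : ((n / k : ℕ) : ℝ) ≤ (n : ℝ) / k := Nat.cast_div_le.trans le_rfl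
    have h2 : (1 : ℝ) ≤ (n : ℝ) / k := by
      rw [le_div_iff₀ hk0]; exact_mod_cast by simpa using hkn
    push_cast
    rw [two_mul, add_div]
    linarith

lemma Eset_one_le {k : ℕ} (hk : 1 ≤ k) (hkn : k ≤ n) {i : ℕ} (hi : i ∈ Eset n k) : 1 ≤ i := by
  have hk0 : (0 : ℝ) < k := by exact_mod_cast hk
  simp only [Eset, Finset.mem_filter, Finset.mem_range] at hi
  have h2 : (1 : ℝ) ≤ (n : ℝ) / k := by
    rw [le_div_iff₀ hk0]; exact_mod_cast by simpa using hkn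
  have : (1 : ℝ) ≤ (i : ℝ) := le_trans h2 hi.2.1
  exact_mod_cast this

/-- The crucial estimate: `‖d u_{n,k} d⁻¹‖ ≤ c_n⁻¹` for `1 ≤ k ≤ n`. -/
lemma opNorm_conj_umat_le {k : ℕ} (hc1 : 1 < c n) (hk : 1 ≤ k) (hkn : k ≤ n) :
    opNorm (dMat c n * umat n k * dMatInv c n) ≤ (c n)⁻¹ := by
  have hc0 : c n ≠ 0 := ne_of_gt (lt_trans zero_lt_one hc1)
  have hcard : 0 < (Eset n k).card := Finset.card_pos.mpr (Eset_nonempty hk hkn)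
  have hrw : dMat c n * umat n k * dMatInv c n
      = ((Eset n k).card : ℂ)⁻¹ • ∑ i ∈ Eset n k,
          (((((c n)⁻¹ : ℝ) : ℂ)) ^ i • (Lmat n) ^ i) := by
    rw [umat, if_pos hkn, Matrix.mul_smul, Matrix.smul_mul, Finset.mul_sum, Finset.sum_mul]
    congr 1
    exact Finset.sum_congr rfl fun i _ => conjPow hc0 i
  rw [hrw, opNorm_eq, map_smul, map_sum]
  have hbound : ∀ i ∈ Eset n k,
      ‖Matrix.toEuclideanCLM (𝕜 := ℂ) (((((c n)⁻¹ : ℝ) : ℂ)) ^ i • (Lmat n) ^ i)‖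
        ≤ (c n)⁻¹ := by
    intro i hi
    rw [map_smul, map_pow]
    rw [norm_smul ((((c n)⁻¹ : ℝ) : ℂ) ^ i) (Matrix.toEuclideanCLM (𝕜 := ℂ) (Lmat n) ^ i),
      norm_pow]
    have h1 : ‖((((c n)⁻¹ : ℝ) : ℂ))‖ = (c n)⁻¹ := by
      rw [Complex.norm_real, Real.norm_eq_abs, abs_of_nonneg (inv_nonneg.mpr (le_of_lt
        (lt_trans zero_lt_one hc1)))]
    rw [h1]
    have h2 : ‖(Matrix.toEuclideanCLM (𝕜 := ℂ) (Lmat n)) ^ i‖ ≤ 1 :=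
      clm_pow_norm_le _ (by rw [← opNorm_eq]; exact opNorm_L_le n) i
    have h3 : ((c n)⁻¹) ^ i ≤ (c n)⁻¹ := by
      have := pow_le_pow_of_le_one (inv_nonneg.mpr (le_of_lt (lt_trans zero_lt_one hc1)))
        (by rw [inv_le_one₀ (lt_trans zero_lt_one hc1)]; exact le_of_lt hc1)
        (Eset_one_le hk hkn hi)
      simpa using this
    calc ((c n)⁻¹) ^ i * ‖(Matrix.toEuclideanCLM (𝕜 := ℂ) (Lmat n)) ^ i‖
        ≤ ((c n)⁻¹) ^ i * 1 := by
          apply mul_le_mul_of_nonneg_left h2 (by positivity)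
      _ = ((c n)⁻¹) ^ i := mul_one _
      _ ≤ (c n)⁻¹ := h3
  calc ‖(((Eset n k).card : ℂ))⁻¹ • ∑ i ∈ Eset n k,
        Matrix.toEuclideanCLM (𝕜 := ℂ) (((((c n)⁻¹ : ℝ) : ℂ)) ^ i • (Lmat n) ^ i)‖
      = ((Eset n k).card : ℝ)⁻¹ * ‖∑ i ∈ Eset n k,
        Matrix.toEuclideanCLM (𝕜 := ℂ) (((((c n)⁻¹ : ℝ) : ℂ)) ^ i • (Lmat n) ^ i)‖ := by
        rw [norm_smul (((Eset n k).card : ℂ))⁻¹ (∑ i ∈ Eset n k,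
          Matrix.toEuclideanCLM (𝕜 := ℂ) (((((c n)⁻¹ : ℝ) : ℂ)) ^ i • (Lmat n) ^ i)),
          norm_inv, Complex.norm_natCast]
    _ ≤ ((Eset n k).card : ℝ)⁻¹ * ((Eset n k).card * (c n)⁻¹) := by
        apply mul_le_mul_of_nonneg_left _ (by positivity)
        calc ‖∑ i ∈ Eset n k,
            Matrix.toEuclideanCLM (𝕜 := ℂ) (((((c n)⁻¹ : ℝ) : ℂ)) ^ i • (Lmat n) ^ i)‖
            ≤ ∑ i ∈ Eset n k,
              ‖Matrix.toEuclideanCLM (𝕜 := ℂ) (((((c n)⁻¹ : ℝ) : ℂ)) ^ i • (Lmat n) ^ i)‖ :=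
              norm_sum_le _ _
          _ ≤ ∑ _i ∈ Eset n k, (c n)⁻¹ := Finset.sum_le_sum hbound
          _ = (Eset n k).card * (c n)⁻¹ := by rw [Finset.sum_const, nsmul_eq_mul]
    _ = (c n)⁻¹ := by
        have hcne : (((Eset n k).card : ℕ) : ℝ) ≠ 0 := ne_of_gt (by exact_mod_cast hcard)
        rw [← mul_assoc, inv_mul_cancel₀ hcne, one_mul]

/-- An eigenvalue is bounded by the operator norm of any `d`-conjugate. -/
lemma eig_le_conj_opNorm (hc : 0 < c n) (A : Matrix (Fin n) (Fin n) ℂ) {μ : ℂ}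
    (h : Module.End.HasEigenvalue (Matrix.toLin' A) μ) :
    ‖μ‖ ≤ opNorm (dMat c n * A * dMatInv c n) := by
  have hc0 : c n ≠ 0 := ne_of_gt hc
  obtain ⟨v, hv⟩ := h.exists_hasEigenvector
  have hv1 : A.mulVec v = μ • v := by
    have := hv.apply_eq_smul
    rwa [Matrix.toLin'_apply] at this
  set w : EuclideanSpace ℂ (Fin n) := (WithLp.equiv 2 (Fin n → ℂ)).symm ((dMat c n).mulVec v)
    with hw
  have hw0 : w ≠ 0 := by
    obtain ⟨i, hi⟩ := Function.ne_iff.mp hv.right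
    intro hcon
    apply hi
    have : (dMat c n).mulVec v i = 0 := by
      have := congrFun (congrArg (WithLp.equiv 2 (Fin n → ℂ)) hcon) i
      simpa [hw] using this
    rw [dMat, Matrix.mulVec_diagonal] at this
    have hne : ((c n ^ ((i : ℕ) + 1) : ℝ) : ℂ) ≠ 0 := by
      exact_mod_cast pow_ne_zero _ hc0
    exact (mul_eq_zero.mp this).resolve_left hne
  have happ : Matrix.toEuclideanCLM (𝕜 := ℂ) (dMat c n * A * dMatInv c n) w = μ • w := by
    rw [hw]
    change WithLp.toLp 2 (Matrix.toLin' (dMat c n * A * dMatInv c n) ((dMat c n).mulVec v)) = _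
    have : Matrix.toLin' (dMat c n * A * dMatInv c n) ((dMat c n).mulVec v)
        = μ • ((dMat c n).mulVec v) := by
      rw [Matrix.toLin'_apply, Matrix.mulVec_mulVec]
      have h2 : dMat c n * A * dMatInv c n * dMat c n = dMat c n * A := by
        rw [mul_assoc, dInv_mul_d hc0, mul_one]
      rw [h2, ← Matrix.mulVec_mulVec, hv1, Matrix.mulVec_smul]
    rw [this]
    rfl
  have hwn : 0 < ‖w‖ := norm_pos_iff.mpr hw0
  have : ‖μ‖ * ‖w‖ ≤ opNorm (dMat c n * A * dMatInv c n) * ‖w‖ := by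
    calc ‖μ‖ * ‖w‖ = ‖μ • w‖ := (norm_smul _ _).symm
      _ = ‖Matrix.toEuclideanCLM (𝕜 := ℂ) (dMat c n * A * dMatInv c n) w‖ := by rw [happ]
      _ ≤ ‖Matrix.toEuclideanCLM (𝕜 := ℂ) (dMat c n * A * dMatInv c n)‖ * ‖w‖ :=
          ContinuousLinearMap.le_opNorm _ _
      _ = opNorm (dMat c n * A * dMatInv c n) * ‖w‖ := by rw [opNorm_eq]
  exact le_of_mul_le_mul_right this hwn

/-- Let `T = (T_n) ∈ A` and `δ > 0`.  Then the set
`{λ ∈ ℂ : |λ| ≥ δ and λ is an eigenvalue of T_n for some n}` is finite.  In particular the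
eigenvalues of the matrices `T_n`, taken over all `n`, accumulate only possibly at `0`. -/
theorem stmt14 (c : ℕ → ℝ) (hmono : StrictMono c) (hone : ∀ n, 1 < c n)
    (hunbdd : ∀ M : ℝ, ∃ n, M < c n)
    (T : ∀ n, Matrix (Fin n) (Fin n) ℂ) (hT : memA c T) (δ : ℝ) (hδ : 0 < δ) :
    {lam : ℂ | δ ≤ ‖lam‖ ∧
      ∃ n : ℕ, Module.End.HasEigenvalue (Matrix.toLin' (T n)) lam}.Finite := by
  obtain ⟨K, hK⟩ := hT.2 (δ / 4) (by positivity)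
  obtain ⟨n₀, hn₀⟩ := hunbdd 2
  set k := max K 1 with hkdef
  set N := max k n₀ with hNdef
  have hfin : (⋃ n ∈ Finset.range (N + 1),
      {lam : ℂ | Module.End.HasEigenvalue (Matrix.toLin' (T n)) lam}).Finite :=
    Set.Finite.biUnion (Finset.range (N + 1)).finite_toSet
      (fun n _ => Module.End.finite_hasEigenvalue (Matrix.toLin' (T n)))
  refine hfin.subset ?_
  rintro lam ⟨hdl, n, hn⟩
  have hnN : n ≤ N := by
    by_contra hcon
    push_neg at hcon
    have hkn : k ≤ n := le_trans (le_max_left _ _) (le_of_lt hcon)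
    have hk1 : 1 ≤ k := le_max_right K 1
    have hc1 : 1 < c n := hone n
    have hc0 : c n ≠ 0 := ne_of_gt (lt_trans zero_lt_one hc1)
    have hc2 : 2 < c n := by
      calc (2 : ℝ) < c n₀ := hn₀
        _ ≤ c n := hmono.monotone (le_trans (le_max_right k n₀) (le_of_lt hcon))
    -- the conjugated norm of `T n` is small
    have hpn := hK k (le_max_left K 1) n
    have h1 : opNorm (dMat c n * (T n * umat n k - T n) * dMatInv c n) ≤ δ / 4 := by
      have h2 : pnorm c n (T n * umat n k - T n) ≤ δ / 4 :=
        le_trans (le_add_of_nonneg_right (pnorm_nonneg _ _ _)) hpn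
      exact le_trans (le_max_right _ _) h2
    set Tc := dMat c n * T n * dMatInv c n with hTc
    set uc := dMat c n * umat n k * dMatInv c n with huc
    have hsplit : dMat c n * (T n * umat n k - T n) * dMatInv c n = Tc * uc - Tc := by
      rw [mul_sub, sub_mul, hTc, huc, conjMul hc0]
    have hule : opNorm uc ≤ 1 / 2 := by
      refine le_trans (opNorm_conj_umat_le hc1 hk1 hkn) ?_
      rw [inv_le_comm₀ (by linarith) (by norm_num)]
      linarith
    have hTcle : opNorm Tc ≤ δ / 2 := by
      have hmul : opNorm (Tc * uc) ≤ opNorm Tc * opNorm uc := opNorm_mul_le _ _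
      have htri : opNorm Tc ≤ opNorm (Tc - Tc * uc) + opNorm (Tc * uc) :=
        opNorm_le_sub_add _ _
      have h4 : opNorm (Tc - Tc * uc) ≤ δ / 4 := by
        rw [opNorm_sub_rev, ← hsplit]; exact h1
      have h5 : opNorm Tc ≤ δ / 4 + opNorm Tc * (1 / 2) := by
        calc opNorm Tc ≤ opNorm (Tc - Tc * uc) + opNorm (Tc * uc) := htri
          _ ≤ δ / 4 + opNorm Tc * opNorm uc := add_le_add h4 hmul
          _ ≤ δ / 4 + opNorm Tc * (1 / 2) := by
              apply add_le_add_right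
              exact mul_le_mul_of_nonneg_left hule (opNorm_nonneg _)
      linarith
    have heig : ‖lam‖ ≤ opNorm Tc :=
      eig_le_conj_opNorm (lt_trans zero_lt_one hc1) (T n) hn
    linarith
  exact Set.mem_biUnion (Finset.mem_coe.mpr (Finset.mem_range.mpr (Nat.lt_succ_of_le hnN))) hn

end
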